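/- arXiv:2210.15193 — 6 statements merged into one kernel-verified Lean document; each statement's English description precedes it below -/
import Mathlib

section
/- Let π be a possibility distribution on ℝⁿ satisfying Assumption 1, let ℓ be a positive integer, ε ∈ [0,1), b ∈ ℝ, x ∈ ℝⁿ, and let g : ℝ → ℝ be a nondecreasing convex function. Then sup_{P ∈ P_π^ℓ} CVaR_P^ε[g(ãᵀx)] ≤ b, where g(ãᵀx) denotes the random variable a ↦ g(aᵀx) under P, holds if and only if there exist w, t ∈ ℝ and reals v_i ≥ 0 (i ∈ Λ) such that: (i) w + Σ_{i∈Λ}(λ_i − 1)v_i ≤ (b − t)(1 − ε); (ii) w − Σ_{j≤i} v_j ≥ 0 for every i ∈ Λ; (iii) w − Σ_{j≤i} v_j + t ≥ g(aᵀx) for every i ∈ Λ and every a ∈ C(λ_i). -/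
open MeasureTheory Set

/-- Conditional Value at Risk at level `ε` of the random variable `X` under `P`:
`CVaR_P^ε[X] = inf_t ( t + (1/(1-ε)) · E_P[max(X - t, 0)] )`. -/
noncomputable def cvar {Ω : Type*} [MeasurableSpace Ω] (P : Measure Ω) (ε : ℝ) (X : Ω → ℝ) : ℝ :=
  ⨅ t : ℝ, (t + (1 / (1 - ε)) * ∫ a, max (X a - t) 0 ∂P)

/-- The discrete ambiguity set `P_π^ℓ`: Borel probability measures `P` with
`P(C(λ_i)) ≥ 1 - λ_i` for all `i ∈ Λ = {0,…,ℓ}`, where `λ_i = i/ℓ`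
(the case `i = 0` states that `P` is supported on `C(0)`). -/
def ambiguitySet (n ℓ : ℕ) (C : ℝ → Set (Fin n → ℝ)) : Set (Measure (Fin n → ℝ)) :=
  {P | IsProbabilityMeasure P ∧
    ∀ i : Fin (ℓ + 1), ENNReal.ofReal (1 - ((i : ℕ) : ℝ) / ℓ) ≤ P (C (((i : ℕ) : ℝ) / ℓ))}

/-!
For `P` in the ambiguity set, write `CVaR_P` as the infimum over `t` of the Rockafellar–Uryasev
objective `t + E_P[(X - t)⁺] / (1 - ε)`. On `C(0)`, which carries all of `P`, conditions (ii) and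
(iii) give `(X - t)⁺ ≤ w - ∑ᵢ vᵢ 1_{C(λᵢ)}`; integrating and using `P(C(λᵢ)) ≥ 1 - λᵢ`, `v ≥ 0`
and (i) bounds the objective at `t` by `b`.

Conversely, let `aₖ` maximise `aᵀx`, hence `g(aᵀx)`, over the nested compact cut `C(k/ℓ)`. The
empirical measure of `a₀, …, a_{ℓ-1}` lies in the ambiguity set, and since `X` is bounded its CVaR
infimum is attained at some `t`. With the nonincreasing `sₖ = (g(aₖᵀx) - t)⁺`, the choice `w = s₀`,
`vᵢ = s_{i-1} - sᵢ` gives `w - ∑_{j ≤ i} vⱼ = sᵢ`, hence (ii) and (iii), and Abel summation turns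
the left side of (i) into `(1/ℓ) ∑_{k<ℓ} sₖ ≤ (b - t)(1 - ε)`.
-/

section Sums

open Finset

theorem Fin.sum_Iic_eq_sum_range {M : Type*} [AddCommMonoid M] {m : ℕ} (f : ℕ → M)
    (i : Fin (m + 1)) : ∑ j ∈ Iic i, f j = ∑ k ∈ range (i + 1), f k := by
  rw [Nat.range_succ_eq_Iic, ← Fin.map_valEmbedding_Iic, sum_map]
  rfl

theorem sum_range_succ_sub_pred {G : Type*} [AddCommGroup G] (s : ℕ → G) (m : ℕ) :
    ∑ k ∈ range (m + 1), (s (k - 1) - s k) = s 0 - s m := by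
  simp only [sum_range_succ', Nat.add_sub_cancel, sum_range_sub', Nat.zero_sub, sub_self,
    add_zero]

theorem sum_range_succ_natCast_mul_sub_pred {R : Type*} [CommRing R] (s : ℕ → R)
    (m : ℕ) : ∑ k ∈ range (m + 1), (k : R) * (s (k - 1) - s k) = ∑ k ∈ range m, s k - m * s m := by
  induction m with
  | zero => simp
  | succ m ih =>
    rw [sum_range_succ, ih, sum_range_succ, Nat.add_sub_cancel]
    push_cast
    ring

theorem sum_div_sub_one_mul_sub_pred {ℓ : ℕ} (hℓ : ℓ ≠ 0) (s : ℕ → ℝ) :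
    s 0 + ∑ i : Fin (ℓ + 1), (((i : ℕ) : ℝ) / ℓ - 1) * (s (i - 1) - s i)
      = (ℓ : ℝ)⁻¹ * ∑ k ∈ range ℓ, s k := by
  have hterm : ∀ i : ℕ, ((i : ℝ) / ℓ - 1) * (s (i - 1) - s i)
      = (ℓ : ℝ)⁻¹ * ((i : ℝ) * (s (i - 1) - s i)) - (s (i - 1) - s i) := fun i => by ring
  rw [Fin.sum_univ_eq_sum_range (fun i => ((i : ℝ) / ℓ - 1) * (s (i - 1) - s i))]
  simp only [hterm]
  rw [sum_sub_distrib, ← mul_sum, sum_range_succ_natCast_mul_sub_pred, sum_range_succ_sub_pred]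
  field_simp
  ring

end Sums

section CVaR

variable {Ω : Type*} [MeasurableSpace Ω] {P : Measure Ω} {ε : ℝ} {X : Ω → ℝ}

noncomputable def cvarObjective (P : Measure Ω) (ε : ℝ) (X : Ω → ℝ) (t : ℝ) : ℝ :=
  t + (1 / (1 - ε)) * ∫ a, max (X a - t) 0 ∂P

theorem cvar_eq_iInf_cvarObjective : cvar P ε X = ⨅ t, cvarObjective P ε X t := rfl

theorem one_le_one_div_one_sub (hε : ε ∈ Ico (0 : ℝ) 1) : 1 ≤ 1 / (1 - ε) := by
  rw [le_div_iff₀ (sub_pos.2 hε.2)]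
  linarith [hε.1]

theorem cvarObjective_le_iff (hε : ε < 1) {t b : ℝ} :
    cvarObjective P ε X t ≤ b ↔ ∫ a, max (X a - t) 0 ∂P ≤ (b - t) * (1 - ε) := by
  rw [cvarObjective, ← le_sub_iff_add_le', one_div, inv_mul_le_iff₀ (sub_pos.2 hε), mul_comm]

theorem integrable_max_sub_zero [IsFiniteMeasure P] (hX : Integrable X P) (t : ℝ) :
    Integrable (fun a => max (X a - t) 0) P :=
  (hX.sub (integrable_const t)).pos_part

theorem integral_sub_const_of_isProbabilityMeasure [IsProbabilityMeasure P] (hX : Integrable X P)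
    (t : ℝ) : ∫ a, (X a - t) ∂P = ∫ a, X a ∂P - t := by
  rw [integral_sub hX (integrable_const t), integral_const, probReal_univ, one_smul]

theorem integral_le_cvarObjective [IsProbabilityMeasure P] (hX : Integrable X P)
    (hε : ε ∈ Ico (0 : ℝ) 1) (t : ℝ) : ∫ a, X a ∂P ≤ cvarObjective P ε X t := by
  have hsub : ∫ a, X a ∂P - t ≤ ∫ a, max (X a - t) 0 ∂P := by
    rw [← integral_sub_const_of_isProbabilityMeasure hX]
    exact integral_mono (hX.sub (integrable_const t)) (integrable_max_sub_zero hX t)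
      fun a => le_max_left _ _
  have hnonneg : 0 ≤ ∫ a, max (X a - t) 0 ∂P := integral_nonneg fun a => le_max_right _ _
  have hc := one_le_one_div_one_sub hε
  unfold cvarObjective
  nlinarith

theorem cvar_le_cvarObjective [IsProbabilityMeasure P] (hX : Integrable X P)
    (hε : ε ∈ Ico (0 : ℝ) 1) (t : ℝ) : cvar P ε X ≤ cvarObjective P ε X t := by
  rw [cvar_eq_iInf_cvarObjective]
  exact ciInf_le ⟨_, forall_mem_range.2 (integral_le_cvarObjective hX hε)⟩ t

theorem lipschitzWith_integral_max_sub [IsProbabilityMeasure P] (hX : Integrable X P) :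
    LipschitzWith 1 fun t => ∫ a, max (X a - t) 0 ∂P := by
  refine LipschitzWith.of_dist_le_mul fun s t => ?_
  rw [NNReal.coe_one, one_mul, dist_eq_norm,
    ← integral_sub (integrable_max_sub_zero hX s) (integrable_max_sub_zero hX t)]
  have hpt : ∀ a, ‖max (X a - s) 0 - max (X a - t) 0‖ ≤ dist s t := fun a =>
    calc ‖max (X a - s) 0 - max (X a - t) 0‖ ≤ |(X a - s) - (X a - t)| :=
          abs_max_sub_max_le_abs ..
      _ = dist s t := by rw [Real.dist_eq, abs_sub_comm]; ring_nf
  simpa using norm_integral_le_of_norm_le_const (μ := P) (Filter.Eventually.of_forall hpt)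

theorem continuous_cvarObjective [IsProbabilityMeasure P] (hX : Integrable X P) :
    Continuous (cvarObjective P ε X) :=
  continuous_id.add (continuous_const.mul (lipschitzWith_integral_max_sub hX).continuous)

theorem cvarObjective_of_ae_le {t : ℝ} (h : ∀ᵐ a ∂P, X a ≤ t) : cvarObjective P ε X t = t := by
  rw [cvarObjective, integral_eq_zero_of_ae (f := fun a => max (X a - t) 0)
    (h.mono fun a ha => max_eq_right (sub_nonpos.2 ha)), mul_zero, add_zero]

theorem cvarObjective_of_ae_ge [IsProbabilityMeasure P] (hX : Integrable X P) {t : ℝ}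
    (h : ∀ᵐ a ∂P, t ≤ X a) :
    cvarObjective P ε X t = t + (1 / (1 - ε)) * (∫ a, X a ∂P - t) := by
  rw [cvarObjective, integral_congr_ae (h.mono fun a ha => max_eq_left (sub_nonneg.2 ha)),
    integral_sub_const_of_isProbabilityMeasure hX]

theorem exists_cvar_eq_cvarObjective [IsProbabilityMeasure P] (hXm : AEMeasurable X P)
    (hε : ε ∈ Ico (0 : ℝ) 1) {A B : ℝ} (hAB : ∀ᵐ a ∂P, X a ∈ Icc A B) :
    ∃ t, cvar P ε X = cvarObjective P ε X t := by
  have hX : Integrable X P := .of_mem_Icc A B hXm hAB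
  obtain ⟨a, hA, hB⟩ := hAB.exists
  obtain ⟨t, -, ht⟩ := isCompact_Icc.exists_isMinOn ⟨A, le_rfl, hA.trans hB⟩
    (continuous_cvarObjective (ε := ε) hX).continuousOn
  -- The objective equals `τ` for `τ ≥ B` and has slope `1 - 1 / (1 - ε) ≤ 0` for `τ ≤ A`.
  have hmin : ∀ τ, cvarObjective P ε X t ≤ cvarObjective P ε X τ := by
    intro τ
    rcases le_total τ A with hτA | hτA
    · have hslope : cvarObjective P ε X A ≤ cvarObjective P ε X τ := by
        rw [cvarObjective_of_ae_ge hX (hAB.mono fun a ha => ha.1),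
          cvarObjective_of_ae_ge hX (hAB.mono fun a ha => hτA.trans ha.1)]
        nlinarith [one_le_one_div_one_sub hε]
      exact (ht ⟨le_rfl, hA.trans hB⟩).trans hslope
    rcases le_total τ B with hτB | hτB
    · exact ht ⟨hτA, hτB⟩
    · calc cvarObjective P ε X t ≤ cvarObjective P ε X B := ht ⟨hA.trans hB, le_rfl⟩
        _ = B := cvarObjective_of_ae_le (hAB.mono fun a ha => ha.2)
        _ ≤ τ := hτB
        _ = cvarObjective P ε X τ :=
          (cvarObjective_of_ae_le (hAB.mono fun a ha => ha.2.trans hτB)).symm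
  refine ⟨t, le_antisymm (cvar_le_cvarObjective hX hε t) ?_⟩
  rw [cvar_eq_iInf_cvarObjective]
  exact le_ciInf hmin

end CVaR

section Feasible

open Finset

variable {Ω ι : Type*} [Fintype ι] [LinearOrder ι] [LocallyFiniteOrderBot ι]
  {X : Ω → ℝ} {S : ι → Set Ω} {v : ι → ℝ} {w t : ℝ}

theorem max_sub_le_sub_sum_indicator (hv : ∀ i, 0 ≤ v i)
    (hS : ∀ i, ∀ a ∈ S i, max (X a - t) 0 ≤ w - ∑ j ∈ Iic i, v j) {a : Ω} (ha : ∃ i, a ∈ S i) :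
    max (X a - t) 0 ≤ w - ∑ i, (S i).indicator (fun _ => v i) a := by
  classical
  set T := univ.filter fun i => a ∈ S i
  have hT : T.Nonempty := let ⟨i, hi⟩ := ha; ⟨i, mem_filter.2 ⟨mem_univ i, hi⟩⟩
  have hsum : ∑ i, (S i).indicator (fun _ => v i) a = ∑ i ∈ T, v i := by
    rw [sum_filter]
    exact sum_congr rfl fun i _ => indicator_apply _ _ _
  have hle : ∑ i ∈ T, v i ≤ ∑ j ∈ Iic (T.max' hT), v j :=
    sum_le_sum_of_subset_of_nonneg (fun i hi => mem_Iic.2 (T.le_max' i hi)) fun i _ _ => hv i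
  rw [hsum]
  exact (hS _ a (mem_filter.1 (T.max'_mem hT)).2).trans (by linarith)

variable [MeasurableSpace Ω] {P : Measure Ω}

theorem integral_max_sub_le_of_forall_mem [IsProbabilityMeasure P] (hX : Integrable X P)
    (hSm : ∀ i, MeasurableSet (S i)) {q : ι → ℝ} (hPS : ∀ i, ENNReal.ofReal (1 - q i) ≤ P (S i))
    (hcover : ∀ᵐ a ∂P, ∃ i, a ∈ S i) (hv : ∀ i, 0 ≤ v i)
    (hS : ∀ i, ∀ a ∈ S i, max (X a - t) 0 ≤ w - ∑ j ∈ Iic i, v j) :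
    ∫ a, max (X a - t) 0 ∂P ≤ w + ∑ i, (q i - 1) * v i := by
  have hind : ∀ i, Integrable ((S i).indicator fun _ => v i) P :=
    fun i => (integrable_const (v i)).indicator (hSm i)
  have hbound : ∫ a, (w - ∑ i, (S i).indicator (fun _ => v i) a) ∂P
      = w - ∑ i, P.real (S i) * v i := by
    rw [integral_sub (integrable_const w) (integrable_finsetSum _ fun i _ => hind i),
      integral_const, probReal_univ, one_smul, integral_finsetSum _ fun i _ => hind i]
    simp_rw [integral_indicator_const _ (hSm _), smul_eq_mul]
  have hPS' : ∀ i, 1 - q i ≤ P.real (S i) :=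
    fun i => (ENNReal.ofReal_le_iff_le_toReal (measure_ne_top P _)).1 (hPS i)
  calc ∫ a, max (X a - t) 0 ∂P ≤ ∫ a, (w - ∑ i, (S i).indicator (fun _ => v i) a) ∂P :=
        integral_mono_ae (integrable_max_sub_zero hX t)
          ((integrable_const w).sub (integrable_finsetSum _ fun i _ => hind i))
          (hcover.mono fun a ha => max_sub_le_sub_sum_indicator hv hS ha)
    _ = w - ∑ i, P.real (S i) * v i := hbound
    _ ≤ w - ∑ i, (1 - q i) * v i := by
        gcongr with i
        exacts [hv i, hPS' i]
    _ = w + ∑ i, (q i - 1) * v i := by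
        rw [sub_eq_add_neg, ← sum_neg_distrib]
        congr 1
        exact sum_congr rfl fun i _ => by ring

end Feasible

section Empirical

open Finset
open scoped ENNReal

variable {Ω : Type*} [MeasurableSpace Ω]

noncomputable def empiricalMeasure (ℓ : ℕ) (a : ℕ → Ω) : Measure Ω :=
  (ℓ : ℝ≥0∞)⁻¹ • ∑ k ∈ range ℓ, Measure.dirac (a k)

theorem empiricalMeasure_apply [MeasurableSingletonClass Ω] (ℓ : ℕ) (a : ℕ → Ω) (s : Set Ω)
    [DecidablePred (· ∈ s)] :
    empiricalMeasure ℓ a s = #{k ∈ range ℓ | a k ∈ s} / ℓ := by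
  rw [empiricalMeasure, Measure.smul_apply, Measure.finsetSum_apply, smul_eq_mul,
    ENNReal.div_eq_inv_mul]
  congr 1
  rw [card_eq_sum_ones, Nat.cast_sum, sum_filter]
  exact sum_congr rfl fun k _ => by simp [Set.indicator_apply]

theorem isProbabilityMeasure_empiricalMeasure [MeasurableSingletonClass Ω] {ℓ : ℕ} (hℓ : ℓ ≠ 0)
    (a : ℕ → Ω) : IsProbabilityMeasure (empiricalMeasure ℓ a) := by
  classical
  exact ⟨by simp [empiricalMeasure_apply, ENNReal.div_self (Nat.cast_ne_zero.2 hℓ)]⟩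

theorem integral_empiricalMeasure [MeasurableSingletonClass Ω] (ℓ : ℕ) (a : ℕ → Ω) (f : Ω → ℝ) :
    ∫ x, f x ∂empiricalMeasure ℓ a = (ℓ : ℝ)⁻¹ * ∑ k ∈ range ℓ, f (a k) := by
  rw [empiricalMeasure, integral_smul_measure,
    integral_finsetSum_measure fun k _ => integrable_dirac (by simp)]
  simp [integral_dirac]

end Empirical

section Cuts

variable {E : Type*} [TopologicalSpace E] {π : E → ℝ} {C : ℝ → Set E}

theorem cut_subset_cut (hcut : ∀ lam : ℝ, 0 < lam → C lam = {a | lam ≤ π a})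
    (hsupp : C 0 = closure {a | 0 < π a}) {lam mu : ℝ} (h0 : 0 ≤ lam) (h : lam ≤ mu) :
    C mu ⊆ C lam := by
  rcases h0.eq_or_lt with rfl | hlam
  · rcases h.eq_or_lt with rfl | hmu
    · exact subset_rfl
    rw [hcut mu hmu, hsupp]
    exact fun a ha => subset_closure (hmu.trans_le ha)
  · rw [hcut lam hlam, hcut mu (hlam.trans_le h)]
    exact fun a ha => h.trans ha

theorem cut_natCast_div_subset (hcut : ∀ lam : ℝ, 0 < lam → C lam = {a | lam ≤ π a})
    (hsupp : C 0 = closure {a | 0 < π a}) (ℓ : ℕ) {i k : ℕ} (h : i ≤ k) :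
    C ((k : ℝ) / ℓ) ⊆ C ((i : ℝ) / ℓ) :=
  cut_subset_cut hcut hsupp (by positivity) (by gcongr)

theorem mem_cut_of_le_one (hcut : ∀ lam : ℝ, 0 < lam → C lam = {a | lam ≤ π a})
    (hsupp : C 0 = closure {a | 0 < π a}) {ahat : E} (hnorm : π ahat = 1) {lam : ℝ}
    (h0 : 0 ≤ lam) (h1 : lam ≤ 1) : ahat ∈ C lam :=
  cut_subset_cut hcut hsupp h0 h1 (by rw [hcut 1 one_pos]; exact hnorm.ge)

theorem exists_isMaxOn_cut (hcut : ∀ lam : ℝ, 0 < lam → C lam = {a | lam ≤ π a})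
    (hsupp : C 0 = closure {a | 0 < π a}) {ahat : E} (hnorm : π ahat = 1)
    (hcompact : IsCompact (C 0)) {lam : ℝ} (hclosed : IsClosed (C lam)) (h0 : 0 ≤ lam)
    (h1 : lam ≤ 1) {f : E → ℝ} (hf : ContinuousOn f (C 0)) : ∃ a ∈ C lam, IsMaxOn f (C lam) a :=
  have hsub := cut_subset_cut hcut hsupp le_rfl h0
  (hcompact.of_isClosed_subset hclosed hsub).exists_isMaxOn
    ⟨ahat, mem_cut_of_le_one hcut hsupp hnorm h0 h1⟩ (hf.mono hsub)

end Cuts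

section AmbiguitySet

variable {n ℓ : ℕ} {C : ℝ → Set (Fin n → ℝ)}

theorem ae_mem_of_mem_ambiguitySet (hC : MeasurableSet (C 0)) {P : Measure (Fin n → ℝ)}
    (hP : P ∈ ambiguitySet n ℓ C) : ∀ᵐ a ∂P, a ∈ C 0 := by
  have := hP.1
  have h := hP.2 0
  simp only [Fin.val_zero, Nat.cast_zero, zero_div, sub_zero, ENNReal.ofReal_one] at h
  rw [ae_mem_iff_measure_eq hC.nullMeasurableSet, measure_univ]
  exact le_antisymm prob_le_one h

open Finset in
theorem empiricalMeasure_mem_ambiguitySet (hℓ : ℓ ≠ 0) {a : ℕ → Fin n → ℝ}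
    (ha : ∀ i k : ℕ, i ≤ k → k < ℓ → a k ∈ C ((i : ℝ) / ℓ)) :
    empiricalMeasure ℓ a ∈ ambiguitySet n ℓ C := by
  classical
  refine ⟨isProbabilityMeasure_empiricalMeasure hℓ a, fun i => ?_⟩
  have hiℓ : (i : ℕ) ≤ ℓ := Nat.lt_succ_iff.1 i.isLt
  have hcard : ℓ - i ≤ #{k ∈ range ℓ | a k ∈ C (((i : ℕ) : ℝ) / ℓ)} := by
    rw [← Nat.card_Ico]
    refine card_le_card fun k hk => ?_
    rw [Finset.mem_Ico] at hk
    exact mem_filter.2 ⟨mem_range.2 hk.2, ha i k hk.1 hk.2⟩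
  have hlevel : 1 - ((i : ℕ) : ℝ) / ℓ = ((ℓ - i : ℕ) : ℝ) / ℓ := by
    rw [Nat.cast_sub hiℓ]
    field_simp
  rw [empiricalMeasure_apply, hlevel, ENNReal.ofReal_div_of_pos (by positivity),
    ENNReal.ofReal_natCast, ENNReal.ofReal_natCast]
  gcongr

end AmbiguitySet

open Finset in
theorem exists_weights_of_sum_le {ℓ : ℕ} (hℓ : ℓ ≠ 0) {M : ℕ → ℝ}
    (hM : ∀ k ≤ ℓ, M k ≤ M (k - 1)) {t c : ℝ}
    (h : (ℓ : ℝ)⁻¹ * ∑ k ∈ range ℓ, max (M k - t) 0 ≤ c) :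
    ∃ (w : ℝ) (v : Fin (ℓ + 1) → ℝ), (∀ i, 0 ≤ v i) ∧
      w + ∑ i : Fin (ℓ + 1), (((i : ℕ) : ℝ) / ℓ - 1) * v i ≤ c ∧
      ∀ i : Fin (ℓ + 1), max (M i - t) 0 ≤ w - ∑ j ∈ Iic i, v j := by
  set s : ℕ → ℝ := fun k => max (M k - t) 0
  -- Truncated subtraction makes `0 - 1 = 0`, so `v 0 = s 0 - s 0 = 0`.
  refine ⟨s 0, fun i => s (i - 1) - s i, fun i => ?_, ?_, fun i => ?_⟩
  · exact sub_nonneg.2 (max_le_max (by linarith [hM i i.is_le]) le_rfl)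
  · rwa [sum_div_sub_one_mul_sub_pred hℓ]
  · rw [Fin.sum_Iic_eq_sum_range (fun k => s (k - 1) - s k), sum_range_succ_sub_pred,
      sub_sub_cancel]

section Certificate

open Finset

variable {Ω : Type*} {n ℓ : ℕ}

-- Conditions (i)–(iii), with a general loss `X` in place of `a ↦ g(aᵀx)`.
def IsCVaRCertificate (ℓ : ℕ) (C : ℝ → Set Ω) (X : Ω → ℝ) (ε b w t : ℝ)
    (v : Fin (ℓ + 1) → ℝ) : Prop :=
  (∀ i, 0 ≤ v i) ∧
  w + ∑ i : Fin (ℓ + 1), (((i : ℕ) : ℝ) / ℓ - 1) * v i ≤ (b - t) * (1 - ε) ∧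
  (∀ i : Fin (ℓ + 1), 0 ≤ w - ∑ j ∈ Iic i, v j) ∧
  (∀ i : Fin (ℓ + 1), ∀ a ∈ C (((i : ℕ) : ℝ) / ℓ), X a ≤ w - ∑ j ∈ Iic i, v j + t)

variable {C : ℝ → Set (Fin n → ℝ)} {X : (Fin n → ℝ) → ℝ} {A B ε b : ℝ}

theorem cvar_le_of_isCVaRCertificate (hmeas : ∀ k ≤ ℓ, MeasurableSet (C ((k : ℝ) / ℓ)))
    (hbound : ∀ P ∈ ambiguitySet n ℓ C, ∀ᵐ a ∂P, X a ∈ Icc A B) (hXm : Measurable X)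
    (hε : ε ∈ Ico (0 : ℝ) 1) {w t : ℝ} {v : Fin (ℓ + 1) → ℝ}
    (hcert : IsCVaRCertificate ℓ C X ε b w t v) {P : Measure (Fin n → ℝ)}
    (hP : P ∈ ambiguitySet n ℓ C) : cvar P ε X ≤ b := by
  obtain ⟨hv, hsum, hnonneg, hle⟩ := hcert
  have := hP.1
  have hX := Integrable.of_mem_Icc _ _ hXm.aemeasurable (hbound P hP)
  have hcover : ∀ᵐ a ∂P, ∃ i : Fin (ℓ + 1), a ∈ C (((i : ℕ) : ℝ) / ℓ) := by
    filter_upwards [ae_mem_of_mem_ambiguitySet (by simpa using hmeas 0 ℓ.zero_le) hP] with a ha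
    exact ⟨0, by simpa using ha⟩
  refine (cvar_le_cvarObjective hX hε t).trans ((cvarObjective_le_iff hε.2).2 ?_)
  exact (integral_max_sub_le_of_forall_mem hX (fun i : Fin (ℓ + 1) => hmeas i i.is_le) hP.2
    hcover hv fun i a ha => max_le (by linarith [hle i a ha]) (hnonneg i)).trans hsum

theorem exists_isCVaRCertificate_of_forall_cvar_le (hℓ : ℓ ≠ 0)
    (hanti : ∀ {i k : ℕ}, i ≤ k → C ((k : ℝ) / ℓ) ⊆ C ((i : ℝ) / ℓ))
    (hmax : ∀ k ≤ ℓ, ∃ y ∈ C ((k : ℝ) / ℓ), IsMaxOn X (C ((k : ℝ) / ℓ)) y)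
    (hbound : ∀ P ∈ ambiguitySet n ℓ C, ∀ᵐ a ∂P, X a ∈ Icc A B) (hXm : Measurable X)
    (hε : ε ∈ Ico (0 : ℝ) 1) (H : ∀ P ∈ ambiguitySet n ℓ C, cvar P ε X ≤ b) :
    ∃ w t v, IsCVaRCertificate ℓ C X ε b w t v := by
  choose! a ha hamax using hmax
  have hP := empiricalMeasure_mem_ambiguitySet hℓ fun i k hik hk => hanti hik (ha k hk.le)
  have := hP.1
  obtain ⟨t, ht⟩ := exists_cvar_eq_cvarObjective hXm.aemeasurable hε (hbound _ hP)
  have hb := H _ hP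
  rw [ht, cvarObjective_le_iff hε.2, integral_empiricalMeasure] at hb
  obtain ⟨w, v, hv, hsum, hmaxle⟩ := exists_weights_of_sum_le hℓ (M := fun k => X (a k))
    (fun k hk => hamax (k - 1) (by omega) (hanti (Nat.sub_le k 1) (ha k hk))) hb
  refine ⟨w, t, v, hv, hsum, fun i => (le_max_right _ _).trans (hmaxle i), fun i y hy => ?_⟩
  have hyi : X y ≤ X (a i) := hamax i i.is_le hy
  linarith [(le_max_left _ _).trans (hmaxle i)]

end Certificate

theorem cvar_constraint_iff_general (n ℓ : ℕ) (hℓ : 1 ≤ ℓ)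
    (π : (Fin n → ℝ) → ℝ)
    (C : ℝ → Set (Fin n → ℝ))
    (hcut : ∀ lam : ℝ, 0 < lam → C lam = {a | lam ≤ π a})
    (hsupp : C 0 = closure {a | 0 < π a})
    (ahat : Fin n → ℝ) (hnorm : π ahat = 1)
    (hcompact : IsCompact (C 0))
    (hclosed : ∀ lam ∈ Icc (0 : ℝ) 1, IsClosed (C lam))
    (ε : ℝ) (hε : ε ∈ Ico (0 : ℝ) 1) (b : ℝ) (x : Fin n → ℝ)
    (g : ℝ → ℝ) (hg : Monotone g) :
    (∀ P ∈ ambiguitySet n ℓ C, cvar P ε (fun a => g (∑ j, a j * x j)) ≤ b)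
    ↔ ∃ (w t : ℝ) (v : Fin (ℓ + 1) → ℝ),
        (∀ i, 0 ≤ v i) ∧
        w + ∑ i : Fin (ℓ + 1), (((i : ℕ) : ℝ) / ℓ - 1) * v i ≤ (b - t) * (1 - ε) ∧
        (∀ i : Fin (ℓ + 1), 0 ≤ w - ∑ j ∈ Finset.Iic i, v j) ∧
        (∀ i : Fin (ℓ + 1), ∀ a ∈ C (((i : ℕ) : ℝ) / ℓ),
          g (∑ j, a j * x j) ≤ w - ∑ j ∈ Finset.Iic i, v j + t) := by
  set L : (Fin n → ℝ) → ℝ := fun a => ∑ j, a j * x j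
  have hL : Continuous L := by fun_prop
  have hXm : Measurable fun a => g (L a) := hg.measurable.comp hL.measurable
  have hlevel : ∀ k ≤ ℓ, (k : ℝ) / ℓ ∈ Icc (0 : ℝ) 1 := fun k hk =>
    ⟨by positivity, div_le_one_of_le₀ (by exact_mod_cast hk) (by positivity)⟩
  obtain ⟨R, hR⟩ := hcompact.exists_bound_of_continuousOn hL.continuousOn
  have hbound : ∀ P ∈ ambiguitySet n ℓ C, ∀ᵐ a ∂P, g (L a) ∈ Icc (g (-R)) (g R) := fun P hP =>
    (ae_mem_of_mem_ambiguitySet (hclosed 0 ⟨le_rfl, zero_le_one⟩).measurableSet hP).mono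
      fun a ha => ⟨hg (neg_le_of_abs_le (hR a ha)), hg (le_of_abs_le (hR a ha))⟩
  constructor
  · refine exists_isCVaRCertificate_of_forall_cvar_le (by omega)
      (cut_natCast_div_subset hcut hsupp ℓ) (fun k hk => ?_) hbound hXm hε
    obtain ⟨y, hy, hymax⟩ := exists_isMaxOn_cut hcut hsupp hnorm hcompact
      (hclosed _ (hlevel k hk)) (hlevel k hk).1 (hlevel k hk).2 hL.continuousOn
    exact ⟨y, hy, hymax.comp_mono hg⟩
  · rintro ⟨w, t, v, hcert⟩ P hP
    exact cvar_le_of_isCVaRCertificate (fun k hk => (hclosed _ (hlevel k hk)).measurableSet)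
      hbound hXm hε hcert hP

/-- Theorem (reformulation of the distributionally robust CVaR constraint):
`sup_{P ∈ P_π^ℓ} CVaR_P^ε[g(ãᵀx)] ≤ b` iff the system (i)–(iii) is feasible. -/
theorem cvar_constraint_iff (n ℓ : ℕ) (hn : 1 ≤ n) (hℓ : 1 ≤ ℓ)
    (π : (Fin n → ℝ) → ℝ) (hrange : ∀ a, π a ∈ Icc (0 : ℝ) 1)
    (C : ℝ → Set (Fin n → ℝ))
    (hcut : ∀ lam : ℝ, 0 < lam → C lam = {a | lam ≤ π a})
    (hsupp : C 0 = closure {a | 0 < π a})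
    (ahat : Fin n → ℝ) (hnorm : π ahat = 1)
    (hcont : ContinuousOn π (C 0))
    (hcompact : IsCompact (C 0))
    (hclosed : ∀ lam ∈ Icc (0 : ℝ) 1, IsClosed (C lam))
    (hconvex : ∀ lam ∈ Icc (0 : ℝ) 1, Convex ℝ (C lam))
    (hint : ∀ lam ∈ Ico (0 : ℝ) 1, (interior (C lam)).Nonempty)
    (ε : ℝ) (hε : ε ∈ Ico (0 : ℝ) 1) (b : ℝ) (x : Fin n → ℝ)
    (g : ℝ → ℝ) (hg : Monotone g) (hgconv : ConvexOn ℝ univ g) :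
    (∀ P ∈ ambiguitySet n ℓ C, cvar P ε (fun a => g (∑ j, a j * x j)) ≤ b)
    ↔ ∃ (w t : ℝ) (v : Fin (ℓ + 1) → ℝ),
        (∀ i, 0 ≤ v i) ∧
        w + ∑ i : Fin (ℓ + 1), (((i : ℕ) : ℝ) / ℓ - 1) * v i ≤ (b - t) * (1 - ε) ∧
        (∀ i : Fin (ℓ + 1), 0 ≤ w - ∑ j ∈ Finset.Iic i, v j) ∧
        (∀ i : Fin (ℓ + 1), ∀ a ∈ C (((i : ℕ) : ℝ) / ℓ),
          g (∑ j, a j * x j) ≤ w - ∑ j ∈ Finset.Iic i, v j + t) :=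
  cvar_constraint_iff_general n ℓ hℓ π C hcut hsupp ahat hnorm hcompact hclosed ε hε b x g hg
end

section
/- Let n ≥ 1, â ∈ ℝⁿ, and for each j ∈ [n] let μ_j : ℝ → ℝ be given by μ_j(x) = (1 + (x − â_j)/a̲_j)^{1/z₁} for x ∈ [â_j − a̲_j, â_j], μ_j(x) = (1 + (â_j − x)/ā_j)^{1/z₂} for x ∈ [â_j, â_j + ā_j], and μ_j(x) = 0 otherwise, where a̲_j, ā_j > 0 and z₁, z₂ > 0. Let δ̄ > 0, z > 0 and μ_δ(y) = (1 − y/δ̄)^{1/z} for y ∈ [0, δ̄] and μ_δ(y) = 0 otherwise. Let B ∈ ℝ^{m×n}, p ≥ 1, and define the joint possibility distribution π(a) = min{μ_1(a_1), …, μ_n(a_n), μ_δ(‖B(a − â)‖_p)}. Then for every λ ∈ (0,1], the cut C(λ) = {a ∈ ℝⁿ : π(a) ≥ λ} equals {a ∈ ℝⁿ : â_j − a̲_j(1 − λ^{z₁}) ≤ a_j ≤ â_j + ā_j(1 − λ^{z₂}) for all j ∈ [n], and ‖B(a − â)‖_p ≤ δ̄(1 − λ^z)}. -/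
open Set

/-- The `L_p`-norm of a vector `y ∈ ℝᵐ`: `(∑ i |y i|^p)^{1/p}`. -/
noncomputable def lpNorm {m : ℕ} (p : ℝ) (y : Fin m → ℝ) : ℝ :=
  (∑ i, |y i| ^ p) ^ (1 / p)

lemma le_rpow_one_div_iff_aux {lam t e : ℝ} (hl : 0 ≤ lam) (ht : 0 ≤ t) (he : 0 < e) :
    lam ≤ t ^ (1 / e) ↔ lam ^ e ≤ t := by
  rw [one_div]; exact Real.le_rpow_inv_iff_of_pos hl ht he

/-- The cuts of the joint possibility distribution
`π(a) = min{μ₁(a₁), …, μₙ(aₙ), μ_δ(‖B(a − â)‖_p)}`: for every `λ ∈ (0,1]`,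
`C(λ)` is the box `[â_j − a̲_j(1 − λ^{z₁}), â_j + ā_j(1 − λ^{z₂})]`, `j ∈ [n]`,
intersected with the ball `‖B(a − â)‖_p ≤ dbar(1 − λ^z)`. -/
theorem cut_of_joint_possibility_distribution (n m : ℕ) (hn : 1 ≤ n)
    (ahat al ar : Fin n → ℝ) (hal : ∀ j, 0 < al j) (har : ∀ j, 0 < ar j)
    (z₁ z₂ z dbar p : ℝ) (hz₁ : 0 < z₁) (hz₂ : 0 < z₂) (hz : 0 < z)
    (hdbar : 0 < dbar) (hp : 1 ≤ p)
    (μ : Fin n → ℝ → ℝ)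
    (hleft : ∀ j, ∀ x ∈ Icc (ahat j - al j) (ahat j),
      μ j x = (1 + (x - ahat j) / al j) ^ (1 / z₁))
    (hright : ∀ j, ∀ x ∈ Icc (ahat j) (ahat j + ar j),
      μ j x = (1 + (ahat j - x) / ar j) ^ (1 / z₂))
    (hout : ∀ j, ∀ x, x ∉ Icc (ahat j - al j) (ahat j + ar j) → μ j x = 0)
    (μδ : ℝ → ℝ)
    (hδin : ∀ y ∈ Icc (0 : ℝ) dbar, μδ y = (1 - y / dbar) ^ (1 / z))
    (hδout : ∀ y, y ∉ Icc (0 : ℝ) dbar → μδ y = 0)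
    (B : Matrix (Fin m) (Fin n) ℝ)
    (π : (Fin n → ℝ) → ℝ)
    (hπ : ∀ a, π a = min (⨅ j, μ j (a j)) (μδ (lpNorm p (B.mulVec (a - ahat))))) :
    ∀ lam ∈ Ioc (0 : ℝ) 1,
      {a : Fin n → ℝ | lam ≤ π a}
        = {a : Fin n → ℝ |
            (∀ j, ahat j - al j * (1 - lam ^ z₁) ≤ a j ∧
              a j ≤ ahat j + ar j * (1 - lam ^ z₂)) ∧
            lpNorm p (B.mulVec (a - ahat)) ≤ dbar * (1 - lam ^ z)} := by
  rintro lam ⟨hl0, hl1⟩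
  haveI : Nonempty (Fin n) := ⟨⟨0, hn⟩⟩
  have hpow_pos : ∀ e : ℝ, 0 < e → 0 < lam ^ e := fun e he => Real.rpow_pos_of_pos hl0 e
  have hpow_le : ∀ e : ℝ, 0 < e → lam ^ e ≤ 1 := fun e he =>
    Real.rpow_le_one hl0.le hl1 he.le
  -- pointwise characterization of the marginal cuts
  have hμiff : ∀ j x, (lam ≤ μ j x ↔
      ahat j - al j * (1 - lam ^ z₁) ≤ x ∧ x ≤ ahat j + ar j * (1 - lam ^ z₂)) := by
    intro j x
    have h1 := hpow_pos z₁ hz₁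
    have h2 := hpow_pos z₂ hz₂
    have h1' := hpow_le z₁ hz₁
    have h2' := hpow_le z₂ hz₂
    have halj := hal j
    have harj := har j
    by_cases hx : x ∈ Icc (ahat j - al j) (ahat j + ar j)
    · obtain ⟨hxl, hxr⟩ := hx
      by_cases hx2 : x ≤ ahat j
      · rw [hleft j x ⟨hxl, hx2⟩]
        have ht : (0 : ℝ) ≤ 1 + (x - ahat j) / al j := by
          have : (-1 : ℝ) ≤ (x - ahat j) / al j := by
            rw [le_div_iff₀ halj]; linarith
          linarith
        rw [le_rpow_one_div_iff_aux hl0.le ht hz₁]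
        constructor
        · intro h
          constructor
          · have := (mul_le_mul_of_nonneg_left h halj.le)
            rw [mul_add, mul_div_cancel₀ _ halj.ne'] at this
            nlinarith
          · nlinarith
        · rintro ⟨h, -⟩
          have hd : lam ^ z₁ - 1 ≤ (x - ahat j) / al j := by
            rw [le_div_iff₀ halj]; nlinarith
          linarith
      · push_neg at hx2
        rw [hright j x ⟨hx2.le, hxr⟩]
        have ht : (0 : ℝ) ≤ 1 + (ahat j - x) / ar j := by
          have : (-1 : ℝ) ≤ (ahat j - x) / ar j := by
            rw [le_div_iff₀ harj]; linarith
          linarith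
        rw [le_rpow_one_div_iff_aux hl0.le ht hz₂]
        constructor
        · intro h
          constructor
          · nlinarith
          · have := (mul_le_mul_of_nonneg_left h harj.le)
            rw [mul_add, mul_div_cancel₀ _ harj.ne'] at this
            nlinarith
        · rintro ⟨-, h⟩
          have hd : lam ^ z₂ - 1 ≤ (ahat j - x) / ar j := by
            rw [le_div_iff₀ harj]; nlinarith
          linarith
    · rw [hout j x hx]
      simp only [mem_Icc, not_and_or, not_le] at hx
      constructor
      · intro h; linarith
      · rintro ⟨h1b, h2b⟩
        rcases hx with hx | hx <;> nlinarith
  -- characterization of the cut of μδ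
  have hynn : ∀ a : Fin n → ℝ, 0 ≤ lpNorm p (B.mulVec (a - ahat)) := by
    intro a
    apply Real.rpow_nonneg
    apply Finset.sum_nonneg
    intro i _
    exact Real.rpow_nonneg (abs_nonneg _) _
  have hδiff : ∀ y : ℝ, 0 ≤ y → (lam ≤ μδ y ↔ y ≤ dbar * (1 - lam ^ z)) := by
    intro y hy
    have hzp := hpow_pos z hz
    by_cases hyd : y ≤ dbar
    · rw [hδin y ⟨hy, hyd⟩]
      have ht : (0 : ℝ) ≤ 1 - y / dbar := by
        have : y / dbar ≤ 1 := by rw [div_le_one hdbar]; exact hyd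
        linarith
      rw [le_rpow_one_div_iff_aux hl0.le ht hz]
      constructor
      · intro h
        have := (mul_le_mul_of_nonneg_left h hdbar.le)
        rw [mul_sub, mul_div_cancel₀ _ hdbar.ne'] at this
        nlinarith
      · intro h
        have : y / dbar ≤ 1 - lam ^ z := by rw [div_le_iff₀ hdbar]; nlinarith
        linarith
    · push_neg at hyd
      rw [hδout y (by simp [mem_Icc]; intro; linarith)]
      constructor
      · intro h; linarith
      · intro h; nlinarith
  ext a
  simp only [mem_setOf_eq, hπ, le_min_iff]
  rw [le_ciInf_iff ((Set.finite_range _).bddBelow)]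
  constructor
  · rintro ⟨h1, h2⟩
    exact ⟨fun j => (hμiff j (a j)).1 (h1 j), (hδiff _ (hynn a)).1 h2⟩
  · rintro ⟨h1, h2⟩
    exact ⟨fun j => (hμiff j (a j)).2 (h1 j), (hδiff _ (hynn a)).2 h2⟩
end

section
/- Let P be a probability measure and X an essentially bounded real random variable. Then CVaR_P^ε[X] tends to the essential supremum of X (the maximal value X can take, up to P-null sets) as ε → 1 from the left. -/
/-!
Write `c = 1 / (1 - ε)` and `S = essSup X P`. Evaluating the objective at `t = S` gives
`CVaR ≤ S`, since `(X - S)⁺ = 0` almost surely. Conversely, for `m < S` the event `{m < X}` has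
some probability `p > 0`, and Markov's inequality gives `E[(X - t)⁺] ≥ (m - t) p`; once
`1 - ε ≤ p` we have `c p ≥ 1`, so every value of the objective is at least `m`.
-/

open MeasureTheory Filter

theorem measure_lt_ne_zero_of_lt_essSup {α β : Type*} [MeasurableSpace α]
    [ConditionallyCompleteLinearOrder β] {μ : Measure α} {f : α → β} {m : β}
    (hf : IsCoboundedUnder (· ≤ ·) (ae μ) f) (hm : m < essSup f μ) :
    μ {a | m < f a} ≠ 0 := by
  intro h
  refine hm.not_ge (essSup_le_of_ae_le m ?_ hf)
  simpa [EventuallyLE, ae_iff] using h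

section Cvar

variable {Ω : Type*} [MeasurableSpace Ω] {P : Measure Ω} {X : Ω → ℝ} {ε : ℝ}

theorem sub_mul_measureReal_lt_le_integral_max_sub [IsFiniteMeasure P] (hX : Integrable X P)
    (m t : ℝ) : (m - t) * P.real {a | m < X a} ≤ ∫ a, max (X a - t) 0 ∂P := by
  have hpos : 0 ≤ ∫ a, max (X a - t) 0 ∂P := integral_nonneg fun _ => le_max_right _ _
  rcases le_total m t with hmt | htm
  · exact (mul_nonpos_of_nonpos_of_nonneg (by linarith) measureReal_nonneg).trans hpos
  · calc (m - t) * P.real {a | m < X a}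
        ≤ (m - t) * P.real {a | m - t ≤ max (X a - t) 0} := by
          refine mul_le_mul_of_nonneg_left (measureReal_mono fun a ha => ?_) (by linarith)
          exact le_max_of_le_left (sub_le_sub_right (le_of_lt ha) t)
      _ ≤ ∫ a, max (X a - t) 0 ∂P :=
          mul_meas_ge_le_integral_of_nonneg (ae_of_all _ fun _ => le_max_right _ _)
            (hX.sub (integrable_const t)).pos_part _

theorem integral_le_cvar_objective [IsProbabilityMeasure P] (hX : Integrable X P) (hε₀ : 0 ≤ ε)
    (hε₁ : ε < 1) (t : ℝ) : ∫ a, X a ∂P ≤ t + (1 / (1 - ε)) * ∫ a, max (X a - t) 0 ∂P := by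
  have hmean : ∫ a, X a ∂P - t ≤ ∫ a, max (X a - t) 0 ∂P := by
    calc ∫ a, X a ∂P - t = ∫ a, (X a - t) ∂P := by
          rw [integral_sub hX (integrable_const t)]; simp
      _ ≤ ∫ a, max (X a - t) 0 ∂P :=
          integral_mono (hX.sub (integrable_const t)) (hX.sub (integrable_const t)).pos_part
            fun _ => le_max_left _ _
  have hscale : ∫ a, max (X a - t) 0 ∂P ≤ (1 / (1 - ε)) * ∫ a, max (X a - t) 0 ∂P :=
    le_mul_of_one_le_left (integral_nonneg fun _ => le_max_right _ _)
      (by rw [le_div_iff₀ (by linarith)]; linarith)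
  linarith

theorem cvar_le_of_ae_le [IsProbabilityMeasure P] (hX : Integrable X P) (hε₀ : 0 ≤ ε)
    (hε₁ : ε < 1) {s : ℝ} (hs : ∀ᵐ a ∂P, X a ≤ s) : cvar P ε X ≤ s := by
  have hzero : ∫ a, max (X a - s) 0 ∂P = 0 :=
    integral_eq_zero_of_ae (hs.mono fun a ha => max_eq_right (by linarith))
  calc cvar P ε X ≤ s + (1 / (1 - ε)) * ∫ a, max (X a - s) 0 ∂P :=
        -- `ciInf_le` needs the objective bounded below, which fails for `ε < 0`.
        ciInf_le ⟨∫ a, X a ∂P, by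
          rintro _ ⟨t, rfl⟩
          exact integral_le_cvar_objective hX hε₀ hε₁ t⟩ s
    _ = s := by rw [hzero, mul_zero, add_zero]

theorem le_cvar_of_sub_le_measureReal [IsFiniteMeasure P] (hX : Integrable X P) (hε₁ : ε < 1)
    {m : ℝ} (hp : 1 - ε ≤ P.real {a | m < X a}) : m ≤ cvar P ε X := by
  have hc : 0 < 1 - ε := by linarith
  refine le_ciInf fun t => ?_
  have hpos : 0 ≤ ∫ a, max (X a - t) 0 ∂P := integral_nonneg fun _ => le_max_right _ _
  rcases le_total m t with hmt | htm
  · have : 0 ≤ (1 / (1 - ε)) * ∫ a, max (X a - t) 0 ∂P := by positivity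
    linarith
  · calc m ≤ t + (m - t) * (P.real {a | m < X a} / (1 - ε)) := by
          have : 1 ≤ P.real {a | m < X a} / (1 - ε) := by rwa [le_div_iff₀ hc, one_mul]
          linarith [le_mul_of_one_le_right (sub_nonneg.2 htm) this]
      _ = t + (1 / (1 - ε)) * ((m - t) * P.real {a | m < X a}) := by ring
      _ ≤ t + (1 / (1 - ε)) * ∫ a, max (X a - t) 0 ∂P := by
          gcongr
          exact sub_mul_measureReal_lt_le_integral_max_sub hX m t

end Cvar

/-- For an essentially bounded random variable `X`, `CVaR_P^ε[X]` tends to the essential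
supremum of `X` as `ε → 1` from the left. -/
theorem cvar_tendsto_essSup {Ω : Type*} [MeasurableSpace Ω]
    (P : Measure Ω) [IsProbabilityMeasure P] (X : Ω → ℝ)
    (hmeas : AEStronglyMeasurable X P) (M : ℝ) (hbdd : ∀ᵐ a ∂P, |X a| ≤ M) :
    Tendsto (fun ε : ℝ => cvar P ε X) (nhdsWithin 1 (Set.Iio 1)) (nhds (essSup X P)) := by
  have hX : Integrable X P := .of_bound hmeas M hbdd
  have hle : IsBoundedUnder (· ≤ ·) (ae P) X :=
    isBoundedUnder_of_eventually_le (hbdd.mono fun _ h => (abs_le.mp h).2)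
  have hge : IsCoboundedUnder (· ≤ ·) (ae P) X :=
    isCoboundedUnder_le_of_eventually_le _ (hbdd.mono fun _ h => (abs_le.mp h).1)
  refine tendsto_order.2 ⟨fun b hb => ?_, fun b hb => ?_⟩
  · obtain ⟨m, hbm, hmS⟩ := exists_between hb
    have hp : 0 < P.real {a | m < X a} :=
      ENNReal.toReal_pos (measure_lt_ne_zero_of_lt_essSup hge hmS) (measure_ne_top _ _)
    filter_upwards [Ioo_mem_nhdsLT (sub_lt_self 1 hp)] with ε hε
    exact hbm.trans_le (le_cvar_of_sub_le_measureReal hX hε.2 (by linarith [hε.1]))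
  · filter_upwards [Ioo_mem_nhdsLT one_pos] with ε hε
    exact (cvar_le_of_ae_le hX hε.1.le hε.2 (ae_le_essSup hle)).trans_lt hb
end

section
/- Let P be a probability measure, X a P-integrable real random variable, ε ∈ [0,1) and b ∈ ℝ. If CVaR_P^ε[X] ≤ b, then P(X ≤ b) ≥ ε. -/
open MeasureTheory

lemma max_sub_add_ite_lt_le_max_sub (x b t : ℝ) :
    max (x - b) 0 + (if b < x then b - t else 0) ≤ max (x - t) 0 := by
  split_ifs with hx
  · rw [max_eq_left (by linarith)]
    linarith [le_max_left (x - t) 0]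
  · rw [max_eq_right (by linarith), add_zero]
    exact le_max_right _ _

lemma add_le_add_one_div_one_sub_mul {ε q m I b t : ℝ}
    (hε : ε ∈ Set.Ico (0 : ℝ) 1) (hq : 1 - ε ≤ q) (hq1 : q ≤ 1) (hm : 0 ≤ m)
    (hI : 0 ≤ I) (hmI : m + (b - t) * q ≤ I) :
    b + m ≤ t + 1 / (1 - ε) * I := by
  obtain ⟨hε0, hε1⟩ := hε
  have h1ε : 0 < 1 - ε := by linarith
  rcases le_total t b with htb | hbt
  · have : (b - t + m) * (1 - ε) ≤ I := by
      nlinarith [mul_le_mul_of_nonneg_left hq (sub_nonneg.2 htb)]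
    rw [one_div_mul_eq_div, ← sub_le_iff_le_add', le_div_iff₀ h1ε]
    linarith
  · have hI' : I ≤ 1 / (1 - ε) * I :=
      le_mul_of_one_le_left hI (by rw [le_div_iff₀ h1ε]; linarith)
    nlinarith [mul_le_mul_of_nonneg_left hq1 (sub_nonneg.2 hbt)]

section
variable {Ω : Type*} [MeasurableSpace Ω] {P : Measure Ω} {X : Ω → ℝ}

lemma integral_max_sub_add_mul_measureReal_le [IsFiniteMeasure P] (hX : Integrable X P)
    (b t : ℝ) :
    ∫ a, max (X a - b) 0 ∂P + (b - t) * P.real {a | b < X a} ≤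
      ∫ a, max (X a - t) 0 ∂P := by
  have hS : NullMeasurableSet {a | b < X a} P :=
    nullMeasurableSet_lt aemeasurable_const hX.aemeasurable
  have hpos (s : ℝ) : Integrable (fun a => max (X a - s) 0) P :=
    (hX.sub (integrable_const s)).pos_part
  have hind : Integrable ({a | b < X a}.indicator fun _ => b - t) P :=
    (integrable_const (b - t)).indicator₀ hS
  calc ∫ a, max (X a - b) 0 ∂P + (b - t) * P.real {a | b < X a}
      = ∫ a, (max (X a - b) 0 + {a | b < X a}.indicator (fun _ => b - t) a) ∂P := by
        rw [integral_add (hpos b) hind, integral_indicator₀ hS, setIntegral_const, smul_eq_mul,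
          mul_comm]
    _ ≤ ∫ a, max (X a - t) 0 ∂P := by
        refine integral_mono ((hpos b).add hind) (hpos t) fun a => ?_
        simpa only [Set.indicator_apply, Set.mem_ofPred_eq] using
          max_sub_add_ite_lt_le_max_sub (X a) b t

lemma add_integral_max_sub_le_cvar [IsProbabilityMeasure P] (hX : Integrable X P) {ε b : ℝ}
    (hε : ε ∈ Set.Ico (0 : ℝ) 1) (hq : 1 - ε ≤ P.real {a | b < X a}) :
    b + ∫ a, max (X a - b) 0 ∂P ≤ cvar P ε X :=
  le_ciInf fun t => add_le_add_one_div_one_sub_mul hε hq measureReal_le_one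
    (integral_nonneg fun _ => le_max_right _ _) (integral_nonneg fun _ => le_max_right _ _)
    (integral_max_sub_add_mul_measureReal_le hX b t)

lemma integral_max_sub_pos [IsFiniteMeasure P] (hX : Integrable X P) {b : ℝ}
    (hb : 0 < P {a | b < X a}) :
    0 < ∫ a, max (X a - b) 0 ∂P := by
  have hi : Integrable (fun a => max (X a - b) 0) P := (hX.sub (integrable_const b)).pos_part
  have hnn : 0 ≤ fun a => max (X a - b) 0 := fun _ => le_max_right _ _
  rw [integral_pos_iff_support_of_nonneg hnn hi]
  convert hb using 3
  ext a
  simp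

end

/-- Conservative approximation of chance constraints by the CVaR criterion:
if `CVaR_P^ε[X] ≤ b` then `P(X ≤ b) ≥ ε`. -/
theorem cvar_le_imp_chance_constraint {Ω : Type*} [MeasurableSpace Ω]
    (P : Measure Ω) [IsProbabilityMeasure P] (X : Ω → ℝ) (hX : Integrable X P)
    (ε : ℝ) (hε : ε ∈ Set.Ico (0 : ℝ) 1) (b : ℝ)
    (hcvar : cvar P ε X ≤ b) :
    ENNReal.ofReal ε ≤ P {a | X a ≤ b} := by
  have hS : NullMeasurableSet {a | b < X a} P :=
    nullMeasurableSet_lt aemeasurable_const hX.aemeasurable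
  have hcompl : P.real {a | X a ≤ b} = 1 - P.real {a | b < X a} := by
    rw [← probReal_compl_eq_one_sub₀ hS]
    congr 1; ext a; simp
  rw [ENNReal.ofReal_le_iff_le_toReal (measure_ne_top P _), ← measureReal_def, hcompl]
  by_contra! hlt
  have hq : 1 - ε ≤ P.real {a | b < X a} := by linarith
  have hS_pos : 0 < P {a | b < X a} :=
    (ENNReal.toReal_pos_iff.1 (show 0 < P.real _ by linarith [hε.2])).1
  linarith [integral_max_sub_pos hX hS_pos, add_integral_max_sub_le_cvar hX hε hq]
end

section
/- Let n ≥ 1, x, â, a̲, ā ∈ ℝⁿ and δ ≥ 0. For every a ∈ ℝⁿ with a̲ ≤ a ≤ ā (componentwise) and ‖a − â‖₁ ≤ δ, and all vectors α, β, φ, ξ ∈ ℝ₊ⁿ and scalar γ ≥ 0 satisfying α_j − β_j + φ_j − ξ_j = x_j and γ − φ_j − ξ_j ≥ 0 for every j ∈ [n], one has aᵀx ≤ āᵀα − a̲ᵀβ + âᵀ(φ − ξ) + δγ. -/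
open Set

/-- Weak LP duality for maximizing `aᵀx` over the confidence set
`{a : a̲ ≤ a ≤ ā, ‖a − â‖₁ ≤ δ}` (continuous budget). -/
theorem weak_duality_l1 (n : ℕ) (hn : 1 ≤ n)
    (x ahat lo hi : Fin n → ℝ) (δ : ℝ) (hδ : 0 ≤ δ) :
    ∀ a : Fin n → ℝ, (∀ j, lo j ≤ a j ∧ a j ≤ hi j) → (∑ j, |a j - ahat j|) ≤ δ →
      ∀ (α β φ ξ : Fin n → ℝ) (γ : ℝ),
        (∀ j, 0 ≤ α j) → (∀ j, 0 ≤ β j) → (∀ j, 0 ≤ φ j) → (∀ j, 0 ≤ ξ j) →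
        0 ≤ γ →
        (∀ j, α j - β j + φ j - ξ j = x j) →
        (∀ j, 0 ≤ γ - φ j - ξ j) →
        ∑ j, a j * x j ≤
          ∑ j, hi j * α j - ∑ j, lo j * β j + ∑ j, ahat j * (φ j - ξ j) + δ * γ := by
  intro a hbox hbud α β φ ξ γ hα hβ hφ hξ hγ hx hγφξ
  have key : ∀ j, a j * x j ≤
      hi j * α j - lo j * β j + ahat j * (φ j - ξ j) + |a j - ahat j| * γ := by
    intro j
    have h1 := (hbox j).1
    have h2 := (hbox j).2
    have h3 : a j - ahat j ≤ |a j - ahat j| := le_abs_self _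
    have h4 : ahat j - a j ≤ |a j - ahat j| := by
      rw [abs_sub_comm]; exact le_abs_self _
    have h5 := hγφξ j
    have hxj := hx j
    rw [← hxj]
    nlinarith [mul_nonneg (sub_nonneg.2 h2) (hα j), mul_nonneg (sub_nonneg.2 h1) (hβ j),
      mul_nonneg (sub_nonneg.2 h3) (hφ j), mul_nonneg (sub_nonneg.2 h4) (hξ j),
      mul_nonneg (abs_nonneg (a j - ahat j)) h5]
  calc ∑ j, a j * x j
      ≤ ∑ j, (hi j * α j - lo j * β j + ahat j * (φ j - ξ j) + |a j - ahat j| * γ) :=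
        Finset.sum_le_sum fun j _ => key j
    _ = ∑ j, hi j * α j - ∑ j, lo j * β j + ∑ j, ahat j * (φ j - ξ j)
          + (∑ j, |a j - ahat j|) * γ := by
        rw [Finset.sum_add_distrib, Finset.sum_add_distrib, Finset.sum_sub_distrib,
          Finset.sum_mul]
    _ ≤ ∑ j, hi j * α j - ∑ j, lo j * β j + ∑ j, ahat j * (φ j - ξ j) + δ * γ := by
        gcongr
end

section
/- Let π be a possibility distribution on ℝⁿ satisfying Assumption 1 and let ℓ be a positive integer. Then the discrete ambiguity set P_π^ℓ is nonempty (it contains the Dirac measure at the nominal scenario â), convex, and compact in the topology of weak convergence of Borel probability measures on the compact set C(0). Moreover, P_π ⊆ P_π^ℓ, where P_π = {P Borel probability measure on C(0) : P(C(λ)) ≥ 1 − λ for all λ ∈ [0,1]}. -/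
/-!
The nominal scenario lies in every cut, so its Dirac measure is admissible. Each constraint
`c ≤ P F` is affine in `P`, whence convexity, and for closed `F` it is closed for weak convergence
by the portmanteau theorem. The constraint at level `0` forces `P (C 0) = 1` with `C 0` compact,
so the admissible probability measures form a closed subset of a compact set by Prokhorov's
theorem.
-/

open MeasureTheory Set

open Filter
open scoped ENNReal

namespace MeasureTheory

variable {Ω : Type*} [MeasurableSpace Ω]

theorem Measure.smul_add_smul_mem_setOf_forall_le {ι : Type*} {c : ι → ℝ≥0∞} {F : ι → Set Ω}
    {P Q : Measure Ω} (hP : IsProbabilityMeasure P ∧ ∀ i, c i ≤ P (F i))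
    (hQ : IsProbabilityMeasure Q ∧ ∀ i, c i ≤ Q (F i)) {s t : ℝ≥0∞} (hst : s + t = 1) :
    IsProbabilityMeasure (s • P + t • Q) ∧ ∀ i, c i ≤ (s • P + t • Q) (F i) := by
  obtain ⟨_, hP⟩ := hP
  obtain ⟨_, hQ⟩ := hQ
  refine ⟨⟨by simp [hst]⟩, fun i => ?_⟩
  calc c i = s * c i + t * c i := by rw [← add_mul, hst, one_mul]
    _ ≤ s * P (F i) + t * Q (F i) := by gcongr <;> simp [hP, hQ]
    _ = (s • P + t • Q) (F i) := by simp

theorem Measure.dirac_mem_setOf_forall_le {ι : Type*} {c : ι → ℝ≥0∞} {F : ι → Set Ω} {x : Ω}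
    (hx : ∀ i, x ∈ F i) (hc : ∀ i, c i ≤ 1) :
    IsProbabilityMeasure (dirac x) ∧ ∀ i, c i ≤ dirac x (F i) :=
  ⟨inferInstance, fun i => (dirac_apply_of_mem (hx i)).symm ▸ hc i⟩

namespace ProbabilityMeasure

variable [TopologicalSpace Ω]

theorem isClosed_setOf_le_apply [OpensMeasurableSpace Ω] [HasOuterApproxClosed Ω] (c : ℝ≥0∞)
    {F : Set Ω} (hF : IsClosed F) :
    IsClosed {P : ProbabilityMeasure Ω | c ≤ (P : Measure Ω) F} :=
  isClosed_iff_frequently.2 fun _ hP =>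
    (le_limsup_of_frequently_le hP).trans (limsup_measure_closed_le_of_tendsto tendsto_id hF)

theorem isCompact_setOf_apply_eq_one [T2Space Ω] [BorelSpace Ω] {K : Set Ω}
    (hK : IsCompact K) : IsCompact {P : ProbabilityMeasure Ω | (P : Measure Ω) K = 1} := by
  convert isCompact_setOfPred_probabilityMeasure_mass_eq_compl_isCompact_le (u := 0)
    (K := fun _ => K) tendsto_const_nhds (fun _ => hK) (Or.inr monotone_const) using 3 with P
  simp [prob_compl_eq_zero_iff hK.measurableSet]

theorem isCompact_setOf_forall_le_apply [T2Space Ω] [BorelSpace Ω] [HasOuterApproxClosed Ω]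
    {ι : Type*} {c : ι → ℝ≥0∞} {F : ι → Set Ω} (hF : ∀ i, IsClosed (F i)) {i₀ : ι}
    (hc : c i₀ = 1) (hK : IsCompact (F i₀)) :
    IsCompact {P : ProbabilityMeasure Ω | ∀ i, c i ≤ (P : Measure Ω) (F i)} := by
  refine (isCompact_setOf_apply_eq_one hK).of_isClosed_subset ?_ fun P hP => ?_
  · simp only [ofPred_forall]
    exact isClosed_iInter fun i => isClosed_setOf_le_apply (c i) (hF i)
  · exact le_antisymm prob_le_one (hc ▸ hP i₀)

end ProbabilityMeasure

end MeasureTheory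

theorem mem_cut_of_eq_one {α : Type*} [TopologicalSpace α] {π : α → ℝ} {C : ℝ → Set α}
    (hcut : ∀ lam : ℝ, 0 < lam → C lam = {a | lam ≤ π a}) (hsupp : C 0 = closure {a | 0 < π a})
    {x : α} (hx : π x = 1) {lam : ℝ} (hlam : lam ∈ Icc (0 : ℝ) 1) : x ∈ C lam := by
  rcases hlam.1.eq_or_lt with rfl | hpos
  · exact hsupp ▸ subset_closure (by simp [hx])
  · rw [hcut lam hpos, mem_ofPred_eq, hx]
    exact hlam.2

theorem ambiguitySet_nonempty_convex_compact_general (n ℓ : ℕ)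
    (π : (Fin n → ℝ) → ℝ)
    (C : ℝ → Set (Fin n → ℝ))
    (hcut : ∀ lam : ℝ, 0 < lam → C lam = {a | lam ≤ π a})
    (hsupp : C 0 = closure {a | 0 < π a})
    (ahat : Fin n → ℝ) (hnorm : π ahat = 1)
    (hcompact : IsCompact (C 0))
    (hclosed : ∀ lam ∈ Icc (0 : ℝ) 1, IsClosed (C lam)) :
    Measure.dirac ahat ∈ ambiguitySet n ℓ C ∧
    (∀ P ∈ ambiguitySet n ℓ C, ∀ Q ∈ ambiguitySet n ℓ C, ∀ s t : ENNReal,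
      s + t = 1 → s • P + t • Q ∈ ambiguitySet n ℓ C) ∧
    IsCompact {P : ProbabilityMeasure (Fin n → ℝ) |
      (P : Measure (Fin n → ℝ)) ∈ ambiguitySet n ℓ C} ∧
    {P : Measure (Fin n → ℝ) | IsProbabilityMeasure P ∧
        ∀ lam ∈ Icc (0 : ℝ) 1, ENNReal.ofReal (1 - lam) ≤ P (C lam)}
      ⊆ ambiguitySet n ℓ C := by
  have hlam (i : Fin (ℓ + 1)) : ((i : ℕ) : ℝ) / ℓ ∈ Icc (0 : ℝ) 1 :=
    ⟨by positivity, div_le_one_of_le₀ (by exact_mod_cast i.is_le) ℓ.cast_nonneg⟩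
  refine ⟨?_, fun P hP Q hQ s t hst => Measure.smul_add_smul_mem_setOf_forall_le hP hQ hst, ?_,
    fun P hP => ⟨hP.1, fun i => hP.2 _ (hlam i)⟩⟩
  · exact Measure.dirac_mem_setOf_forall_le (fun i => mem_cut_of_eq_one hcut hsupp hnorm (hlam i))
      fun i => ENNReal.ofReal_le_one.2 (by linarith [(hlam i).1])
  · convert ProbabilityMeasure.isCompact_setOf_forall_le_apply (fun i => hclosed _ (hlam i))
      (i₀ := 0) ?_ ?_ using 3 with P
    · exact and_iff_right P.prop
    · simp
    · simpa using hcompact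

/-- For a possibility distribution satisfying Assumption 1, the discrete ambiguity set
`P_π^ℓ` is nonempty (containing the Dirac measure at the nominal scenario `â`), convex,
compact in the topology of weak convergence of probability measures, and contains the
continuous ambiguity set `P_π`. -/
theorem ambiguitySet_nonempty_convex_compact (n ℓ : ℕ) (hn : 1 ≤ n) (hℓ : 1 ≤ ℓ)
    (π : (Fin n → ℝ) → ℝ) (hrange : ∀ a, π a ∈ Icc (0 : ℝ) 1)
    (C : ℝ → Set (Fin n → ℝ))
    (hcut : ∀ lam : ℝ, 0 < lam → C lam = {a | lam ≤ π a})
    (hsupp : C 0 = closure {a | 0 < π a})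
    (ahat : Fin n → ℝ) (hnorm : π ahat = 1)
    (hcont : ContinuousOn π (C 0))
    (hcompact : IsCompact (C 0))
    (hclosed : ∀ lam ∈ Icc (0 : ℝ) 1, IsClosed (C lam))
    (hconvex : ∀ lam ∈ Icc (0 : ℝ) 1, Convex ℝ (C lam))
    (hint : ∀ lam ∈ Ico (0 : ℝ) 1, (interior (C lam)).Nonempty) :
    Measure.dirac ahat ∈ ambiguitySet n ℓ C ∧
    (∀ P ∈ ambiguitySet n ℓ C, ∀ Q ∈ ambiguitySet n ℓ C, ∀ s t : ENNReal,
      s + t = 1 → s • P + t • Q ∈ ambiguitySet n ℓ C) ∧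
    IsCompact {P : ProbabilityMeasure (Fin n → ℝ) |
      (P : Measure (Fin n → ℝ)) ∈ ambiguitySet n ℓ C} ∧
    {P : Measure (Fin n → ℝ) | IsProbabilityMeasure P ∧
        ∀ lam ∈ Icc (0 : ℝ) 1, ENNReal.ofReal (1 - lam) ≤ P (C lam)}
      ⊆ ambiguitySet n ℓ C :=
  ambiguitySet_nonempty_convex_compact_general n ℓ π C hcut hsupp ahat hnorm hcompact hclosed
end
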